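/- Let Φ : 𝕊¹ → ℝ² be a smooth entropy, η : [0,∞) → ℝ smooth with η = 0 on [0,1/2] ∪ [2,∞) and η(1) = 1, and let Φ̃(z) = η(|z|)·Φ(z/|z|) (with Φ̃(0)=0) be the induced compactly supported smooth extension to ℝ². Then there exist Ψ ∈ C_c^∞(ℝ², ℝ²) and γ ∈ C_c^∞(ℝ², ℝ) such that DΦ̃(z) = −2 Ψ(z) ⊗ z + γ(z)·Id for every z ∈ ℝ², where Id is the 2×2 identity matrix and (Ψ(z) ⊗ z)_{ij} = Ψ_i(z) z_j. Explicitly one may take γ(z) = z^⊥·(DΦ̃(z) z^⊥)/|z|² and Ψ(z) = (−DΦ̃(z) z + γ(z) z)/(2|z|²) for z ≠ 0, extended by 0 at z = 0. -/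

import Mathlib

open MeasureTheory Real Set Metric Filter
open scoped RealInnerProductSpace Topology ENNReal NNReal

noncomputable section

/-- The Euclidean plane `ℝ²`. -/
abbrev E2 := EuclideanSpace ℝ (Fin 2)

/-- Constructor for points of `ℝ²`. -/
def mk2 (a b : ℝ) : E2 := (WithLp.equiv 2 (Fin 2 → ℝ)).symm ![a, b]

/-- `(a,b)^⊥ = (-b,a)`. -/
def perp (z : E2) : E2 := mk2 (-(z 1)) (z 0)

/-- The point `e^{iθ} = (cos θ, sin θ)` of the unit circle. -/
def sc (θ : ℝ) : E2 := mk2 (Real.cos θ) (Real.sin θ)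

/-- A smooth compactly supported test function with support contained in `Ω`. -/
def IsTestOn (Ω : Set E2) (ζ : E2 → ℝ) : Prop :=
  ContDiff ℝ (⊤ : ℕ∞) ζ ∧ HasCompactSupport ζ ∧ tsupport ζ ⊆ Ω

/-- `u` is divergence-free in the sense of distributions on `Ω`:
`∫_Ω u · ∇ζ = 0` for all test functions `ζ` supported in `Ω`. -/
def DivFreeOn (Ω : Set E2) (u : E2 → E2) : Prop :=
  ∀ ζ : E2 → ℝ, IsTestOn Ω ζ → ∫ x in Ω, ⟪u x, gradient ζ x⟫ = 0

/-- The Gagliardo `W^{1/p,p}` condition on every ball compactly contained in `Ω`: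
`∫_{B×B} |u(x)-u(y)|^p / |x-y|^3 dx dy < ∞`. -/
def GagliardoLoc (p : ℝ) (Ω : Set E2) (u : E2 → E2) : Prop :=
  ∀ (c : E2) (r : ℝ), 0 < r → closure (ball c r) ⊆ Ω →
    ∫⁻ x in ball c r, ∫⁻ y in ball c r,
      ENNReal.ofReal (‖u x - u y‖ ^ p / ‖x - y‖ ^ 3) < ⊤

open Real Set Metric Filter
open scoped RealInnerProductSpace Topology

lemma mk2_apply0 (a b : ℝ) : (mk2 a b) 0 = a := rfl
lemma mk2_apply1 (a b : ℝ) : (mk2 a b) 1 = b := rfl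

lemma ext2 {z w : E2} (h0 : z 0 = w 0) (h1 : z 1 = w 1) : z = w := by
  ext i; fin_cases i <;> assumption

lemma inner2 (z w : E2) : ⟪z, w⟫ = z 0 * w 0 + z 1 * w 1 := by
  simp [PiLp.inner_apply, Fin.sum_univ_two, RCLike.inner_apply]; ring

lemma normsq2 (z : E2) : ‖z‖ ^ 2 = z 0 ^ 2 + z 1 ^ 2 := by
  rw [← real_inner_self_eq_norm_sq, inner2]; ring

lemma smul_apply2 (c : ℝ) (z : E2) (i : Fin 2) : (c • z) i = c * z i := rfl
lemma add_apply2 (z w : E2) (i : Fin 2) : (z + w) i = z i + w i := rfl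
lemma zero_apply2 (i : Fin 2) : (0 : E2) i = 0 := rfl
lemma neg_apply2 (z : E2) (i : Fin 2) : (-z) i = -(z i) := rfl
lemma perp_apply0 (z : E2) : (perp z) 0 = -(z 1) := rfl
lemma perp_apply1 (z : E2) : (perp z) 1 = z 0 := rfl

lemma inner_perp_self (z : E2) : ⟪z, perp z⟫ = 0 := by
  simp [inner2, perp_apply0, perp_apply1]; ring

lemma perp_zero : perp (0 : E2) = 0 := by
  apply ext2 <;> simp [perp_apply0, perp_apply1, zero_apply2]

lemma perp_smul (c : ℝ) (z : E2) : perp (c • z) = c • perp z := by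
  apply ext2 <;> simp [perp_apply0, perp_apply1, smul_apply2] <;> ring

/-- decomposition of any vector in the basis `z, perp z`. -/
lemma decomp2 {z : E2} (hz : z ≠ 0) (w : E2) :
    w = (⟪z, w⟫ / ‖z‖ ^ 2) • z + (⟪perp z, w⟫ / ‖z‖ ^ 2) • perp z := by
  have hn : ‖z‖ ^ 2 ≠ 0 := pow_ne_zero _ (norm_ne_zero_iff.2 hz)
  rw [normsq2] at hn ⊢
  apply ext2 <;>
    simp only [add_apply2, smul_apply2, perp_apply0, perp_apply1, inner2] <;>
    field_simp <;> ring

/-- a vector orthogonal to `z ≠ 0` is a multiple of `perp z`. -/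
lemma orth_decomp {z v : E2} (hz : z ≠ 0) (hv : ⟪z, v⟫ = 0) :
    v = (⟪perp z, v⟫ / ‖z‖ ^ 2) • perp z := by
  have h := decomp2 hz v
  rw [hv, zero_div, zero_smul, zero_add] at h
  exact h

lemma norm_sc (θ : ℝ) : ‖sc θ‖ = 1 := by
  have : ‖sc θ‖ ^ 2 = 1 := by
    rw [normsq2]; show Real.cos θ ^ 2 + Real.sin θ ^ 2 = 1
    exact Real.cos_sq_add_sin_sq θ
  nlinarith [norm_nonneg (sc θ)]

lemma contDiff_perp : ContDiff ℝ (⊤ : ℕ∞) perp := by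
  have : perp = fun z : E2 => (-(z 1)) • (EuclideanSpace.single (0 : Fin 2) (1:ℝ))
      + (z 0) • (EuclideanSpace.single (1 : Fin 2) (1:ℝ)) := by
    funext z
    apply ext2 <;> simp [perp_apply0, perp_apply1, add_apply2, smul_apply2,
      EuclideanSpace.single_apply]
  rw [this]
  have h0 : ContDiff ℝ (⊤ : ℕ∞) (fun z : E2 => z 0) := (EuclideanSpace.proj (𝕜 := ℝ) (0 : Fin 2)).contDiff
  have h1 : ContDiff ℝ (⊤ : ℕ∞) (fun z : E2 => z 1) := (EuclideanSpace.proj (𝕜 := ℝ) (1 : Fin 2)).contDiff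
  exact (h1.neg.smul contDiff_const).add (h0.smul contDiff_const)
lemma norm_eq_sqrt (z : E2) : ‖z‖ = Real.sqrt (z 0 ^ 2 + z 1 ^ 2) := by
  rw [← normsq2, Real.sqrt_sq (norm_nonneg z)]

lemma sqrt_one_add {a b : ℝ} (ha : a ≠ 0) :
    Real.sqrt (1 + (b / a) ^ 2) = Real.sqrt (a ^ 2 + b ^ 2) / |a| := by
  have h1 : 1 + (b / a) ^ 2 = (a ^ 2 + b ^ 2) / a ^ 2 := by field_simp
  rw [h1, Real.sqrt_div (by positivity), Real.sqrt_sq_eq_abs]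

lemma cos_arctan_div {a b : ℝ} (ha : a ≠ 0) :
    Real.cos (Real.arctan (b / a)) = |a| / Real.sqrt (a ^ 2 + b ^ 2) := by
  rw [Real.cos_arctan, sqrt_one_add ha, one_div_div]

lemma sin_arctan_div {a b : ℝ} (ha : a ≠ 0) :
    Real.sin (Real.arctan (b / a)) = (b / a) * |a| / Real.sqrt (a ^ 2 + b ^ 2) := by
  rw [Real.sin_arctan, sqrt_one_add ha, div_div_eq_mul_div]

lemma sqrt_pos_ne {a b : ℝ} (ha : a ≠ 0) : Real.sqrt (a ^ 2 + b ^ 2) ≠ 0 := by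
  have hpos : 0 < a ^ 2 + b ^ 2 := by
    have h1 := abs_pos.2 ha
    nlinarith [sq_nonneg b, sq_abs a]
  exact (Real.sqrt_ne_zero'.2 hpos)

lemma chartA {z : E2} (h : 0 < z 0) :
    Real.cos (Real.arctan (z 1 / z 0)) = z 0 / ‖z‖ ∧
    Real.sin (Real.arctan (z 1 / z 0)) = z 1 / ‖z‖ := by
  have ha := h.ne'
  have hr := sqrt_pos_ne (b := z 1) ha
  rw [norm_eq_sqrt, cos_arctan_div ha, sin_arctan_div ha, abs_of_pos h]
  constructor
  · rfl
  · field_simp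

lemma chartB {z : E2} (h : z 0 < 0) :
    Real.cos (Real.arctan (z 1 / z 0) + Real.pi) = z 0 / ‖z‖ ∧
    Real.sin (Real.arctan (z 1 / z 0) + Real.pi) = z 1 / ‖z‖ := by
  have ha := h.ne
  have hr := sqrt_pos_ne (b := z 1) ha
  rw [Real.cos_add_pi, Real.sin_add_pi, norm_eq_sqrt, cos_arctan_div ha,
    sin_arctan_div ha, abs_of_neg h]
  constructor
  · rw [neg_div, neg_neg]
  · field_simp

lemma chartC {z : E2} (h : 0 < z 1) :
    Real.cos (Real.pi / 2 - Real.arctan (z 0 / z 1)) = z 0 / ‖z‖ ∧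
    Real.sin (Real.pi / 2 - Real.arctan (z 0 / z 1)) = z 1 / ‖z‖ := by
  have ha := h.ne'
  have hr := sqrt_pos_ne (b := z 0) ha
  have hcomm : Real.sqrt (z 1 ^ 2 + z 0 ^ 2) = Real.sqrt (z 0 ^ 2 + z 1 ^ 2) := by
    rw [add_comm]
  rw [Real.cos_pi_div_two_sub, Real.sin_pi_div_two_sub, norm_eq_sqrt,
    cos_arctan_div ha, sin_arctan_div ha, abs_of_pos h, hcomm]
  rw [hcomm] at hr
  constructor
  · field_simp
  · rfl

lemma chartD {z : E2} (h : z 1 < 0) :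
    Real.cos (-(Real.pi / 2) - Real.arctan (z 0 / z 1)) = z 0 / ‖z‖ ∧
    Real.sin (-(Real.pi / 2) - Real.arctan (z 0 / z 1)) = z 1 / ‖z‖ := by
  have ha := h.ne
  have hr := sqrt_pos_ne (b := z 0) ha
  have hcomm : Real.sqrt (z 1 ^ 2 + z 0 ^ 2) = Real.sqrt (z 0 ^ 2 + z 1 ^ 2) := by
    rw [add_comm]
  have hc : ∀ x : ℝ, Real.cos (-(Real.pi / 2) - x) = -Real.sin x := by
    intro x
    rw [show -(Real.pi / 2) - x = -(Real.pi / 2 - (-x)) by ring, Real.cos_neg,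
      Real.cos_pi_div_two_sub, Real.sin_neg]
  have hs : ∀ x : ℝ, Real.sin (-(Real.pi / 2) - x) = -Real.cos x := by
    intro x
    rw [show -(Real.pi / 2) - x = -(Real.pi / 2 - (-x)) by ring, Real.sin_neg,
      Real.sin_pi_div_two_sub, Real.cos_neg]
  rw [hc, hs, norm_eq_sqrt, cos_arctan_div ha, sin_arctan_div ha, abs_of_neg h, hcomm]
  rw [hcomm] at hr
  constructor
  · field_simp
  · field_simp
lemma ne_zero_coord {z : E2} (hz : z ≠ 0) : z 0 ≠ 0 ∨ z 1 ≠ 0 := by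
  by_contra hcon
  push_neg at hcon
  exact hz (ext2 hcon.1 hcon.2)

lemma exists_theta {z : E2} (hz : z ≠ 0) :
    ∃ θ : ℝ, Real.cos θ = z 0 / ‖z‖ ∧ Real.sin θ = z 1 / ‖z‖ := by
  rcases ne_zero_coord hz with h | h
  · rcases h.lt_or_gt with h' | h'
    · exact ⟨_, chartB h'⟩
    · exact ⟨_, chartA h'⟩
  · rcases h.lt_or_gt with h' | h'
    · exact ⟨_, chartD h'⟩
    · exact ⟨_, chartC h'⟩

lemma sc_apply0 (θ : ℝ) : sc θ 0 = Real.cos θ := rfl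
lemma sc_apply1 (θ : ℝ) : sc θ 1 = Real.sin θ := rfl

lemma sc_eq {z : E2} {θ : ℝ} (hcos : Real.cos θ = z 0 / ‖z‖)
    (hsin : Real.sin θ = z 1 / ‖z‖) : sc θ = ‖z‖⁻¹ • z := by
  apply ext2
  · rw [sc_apply0, smul_apply2, hcos, inv_mul_eq_div]
  · rw [sc_apply1, smul_apply2, hsin, inv_mul_eq_div]

lemma hasDerivAt_sc (θ : ℝ) : HasDerivAt sc (perp (sc θ)) θ := by
  have hsc : sc = fun t : ℝ => Real.cos t • EuclideanSpace.single (0 : Fin 2) (1 : ℝ)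
      + Real.sin t • EuclideanSpace.single (1 : Fin 2) (1 : ℝ) := by
    funext t
    apply ext2 <;>
      simp [sc_apply0, sc_apply1, add_apply2, smul_apply2, EuclideanSpace.single_apply]
  have h := ((Real.hasDerivAt_cos θ).smul_const
      (EuclideanSpace.single (0 : Fin 2) (1 : ℝ))).add
    ((Real.hasDerivAt_sin θ).smul_const (EuclideanSpace.single (1 : Fin 2) (1 : ℝ)))
  rw [show ((fun y : ℝ => Real.cos y • EuclideanSpace.single (0 : Fin 2) (1 : ℝ)) + fun y => Real.sin y • EuclideanSpace.single (1 : Fin 2) (1 : ℝ)) = sc by rw [hsc]; rfl] at h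
  refine h.congr_deriv ?_
  apply ext2 <;>
    simp [perp_apply0, perp_apply1, sc_apply0, sc_apply1, add_apply2, smul_apply2,
      EuclideanSpace.single_apply]

/-- **Step 2: decomposition of `DΦ̃`.** For the compactly supported smooth extension `Φ̃`
of a smooth entropy `Φ`, there exist `Ψ ∈ C_c^∞(ℝ²,ℝ²)` and `γ ∈ C_c^∞(ℝ²,ℝ)` with
`DΦ̃(z) = −2 Ψ(z) ⊗ z + γ(z)·Id` for all `z`; explicitly
`γ(z) = z^⊥·(DΦ̃(z) z^⊥)/|z|²` and `Ψ(z) = (−DΦ̃(z)z + γ(z)z)/(2|z|²)` for `z ≠ 0`,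
extended by `0` at `z = 0`. -/
theorem statement7 (Φ : E2 → E2) (hΦsmooth : ContDiff ℝ (⊤ : ℕ∞) (fun θ : ℝ => Φ (sc θ)))
    (hΦent : ∀ θ : ℝ, ⟪deriv (fun θ : ℝ => Φ (sc θ)) θ, sc θ⟫ = 0)
    (η : ℝ → ℝ) (hηsmooth : ContDiffOn ℝ (⊤ : ℕ∞) η (Ici 0))
    (hη0 : ∀ r : ℝ, (0 ≤ r ∧ r ≤ 1 / 2) ∨ 2 ≤ r → η r = 0) (hη1 : η 1 = 1)
    (Φt : E2 → E2) (hΦt0 : Φt 0 = 0)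
    (hΦt : ∀ z : E2, z ≠ 0 → Φt z = η ‖z‖ • Φ (‖z‖⁻¹ • z)) :
    ∃ (Ψ : E2 → E2) (γ : E2 → ℝ),
      ContDiff ℝ (⊤ : ℕ∞) Ψ ∧ HasCompactSupport Ψ ∧
      ContDiff ℝ (⊤ : ℕ∞) γ ∧ HasCompactSupport γ ∧
      (∀ z w : E2, fderiv ℝ Φt z w = (-2 * ⟪z, w⟫) • Ψ z + γ z • w) ∧
      (∀ z : E2, z ≠ 0 →
        γ z = ⟪perp z, fderiv ℝ Φt z (perp z)⟫ / ‖z‖ ^ 2 ∧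
        Ψ z = (2 * ‖z‖ ^ 2)⁻¹ • (-(fderiv ℝ Φt z z) + γ z • z)) ∧
      γ 0 = 0 ∧ Ψ 0 = 0 := by
  classical
  set f : ℝ → E2 := fun θ => Φ (sc θ) with hf_def
  have hf : ContDiff ℝ (⊤ : ℕ∞) f := hΦsmooth
  have hball : ∀ z : E2, ‖z‖ < 1 / 2 → Φt z = 0 := by
    intro z hz
    by_cases h0 : z = 0
    · rw [h0, hΦt0]
    · rw [hΦt z h0, hη0 ‖z‖ (Or.inl ⟨norm_nonneg z, hz.le⟩), zero_smul]
  have hout : ∀ z : E2, 2 ≤ ‖z‖ → Φt z = 0 := by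
    intro z hz
    have h0 : z ≠ 0 := by
      intro h; rw [h, norm_zero] at hz; linarith
    rw [hΦt z h0, hη0 ‖z‖ (Or.inr hz), zero_smul]
  have hne0 : ∀ (i : Fin 2) (z : E2), z i ≠ 0 → z ≠ 0 := by
    intro i z hzi h
    rw [h] at hzi
    exact hzi rfl
  -- smoothness of Φt
  have hsm : ContDiff ℝ (⊤ : ℕ∞) Φt := by
    rw [contDiff_iff_contDiffAt]
    intro z₀
    by_cases hz₀ : ‖z₀‖ < 1 / 2
    · refine (contDiffAt_const (c := (0 : E2))).congr_of_eventuallyEq ?_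
      filter_upwards [isOpen_ball.mem_nhds (show z₀ ∈ ball (0 : E2) (1/2) by
        simpa [mem_ball_zero_iff] using hz₀)] with z hz
      exact hball z (by simpa [mem_ball_zero_iff] using hz)
    · have hz₀ne : z₀ ≠ 0 := by
        intro h; rw [h, norm_zero] at hz₀; norm_num at hz₀
      have hchart : ∀ (θf : E2 → ℝ) (U : Set E2), IsOpen U → z₀ ∈ U →
          ContDiffOn ℝ (⊤ : ℕ∞) θf U → (∀ z ∈ U, z ≠ 0) →
          (∀ z ∈ U, Real.cos (θf z) = z 0 / ‖z‖ ∧ Real.sin (θf z) = z 1 / ‖z‖) →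
          ContDiffAt ℝ (⊤ : ℕ∞) Φt z₀ := by
        intro θf U hUo hzU hθf hUne hUcs
        have heq : ∀ z ∈ U, Φt z = η ‖z‖ • f (θf z) := by
          intro z hz
          rw [hΦt z (hUne z hz), ← sc_eq (hUcs z hz).1 (hUcs z hz).2]
        have hn : ContDiffAt ℝ (⊤ : ℕ∞) (fun z : E2 => η ‖z‖) z₀ := by
          have h2 : ContDiffAt ℝ (⊤ : ℕ∞) (fun z : E2 => ‖z‖) z₀ :=
            contDiffAt_id.norm ℝ (by simpa using hUne z₀ hzU)
          have h3 : ContDiffAt ℝ (⊤ : ℕ∞) η ‖z₀‖ :=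
            hηsmooth.contDiffAt (Ici_mem_nhds (norm_pos_iff.2 (hUne z₀ hzU)))
          exact h3.comp z₀ h2
        have hfc : ContDiffAt ℝ (⊤ : ℕ∞) (fun z : E2 => f (θf z)) z₀ :=
          hf.contDiffAt.comp z₀ (hθf.contDiffAt (hUo.mem_nhds hzU))
        refine (hn.smul hfc).congr_of_eventuallyEq ?_
        filter_upwards [hUo.mem_nhds hzU] with z hz
        exact (heq z hz).symm ▸ rfl
      have hproj : ∀ i : Fin 2, ContDiff ℝ (⊤ : ℕ∞) (fun z : E2 => z i) := fun i =>
        (EuclideanSpace.proj (𝕜 := ℝ) i).contDiff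
      rcases ne_zero_coord hz₀ne with h | h
      · rcases h.lt_or_gt with h' | h'
        · exact hchart (fun z => Real.arctan (z 1 / z 0) + Real.pi) {z : E2 | z 0 < 0}
            (isOpen_lt (hproj 0).continuous continuous_const) h'
            ((Real.contDiff_arctan.comp_contDiffOn (((hproj 1).contDiffOn).div
              ((hproj 0).contDiffOn) (fun z hz => ne_of_lt hz))).add contDiffOn_const)
            (fun z hz => hne0 0 z (ne_of_lt hz))
            (fun z hz => chartB hz)
        · exact hchart (fun z => Real.arctan (z 1 / z 0)) {z : E2 | 0 < z 0}
            (isOpen_lt continuous_const (hproj 0).continuous) h'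
            (Real.contDiff_arctan.comp_contDiffOn (((hproj 1).contDiffOn).div
              ((hproj 0).contDiffOn) (fun z hz => ne_of_gt hz)))
            (fun z hz => hne0 0 z (ne_of_gt hz))
            (fun z hz => chartA hz)
      · rcases h.lt_or_gt with h' | h'
        · exact hchart (fun z => -(Real.pi/2) - Real.arctan (z 0 / z 1)) {z : E2 | z 1 < 0}
            (isOpen_lt (hproj 1).continuous continuous_const) h'
            (contDiffOn_const.sub (Real.contDiff_arctan.comp_contDiffOn
              (((hproj 0).contDiffOn).div ((hproj 1).contDiffOn) (fun z hz => ne_of_lt hz))))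
            (fun z hz => hne0 1 z (ne_of_lt hz))
            (fun z hz => chartD hz)
        · exact hchart (fun z => Real.pi/2 - Real.arctan (z 0 / z 1)) {z : E2 | 0 < z 1}
            (isOpen_lt continuous_const (hproj 1).continuous) h'
            (contDiffOn_const.sub (Real.contDiff_arctan.comp_contDiffOn
              (((hproj 0).contDiffOn).div ((hproj 1).contDiffOn) (fun z hz => ne_of_gt hz))))
            (fun z hz => hne0 1 z (ne_of_gt hz))
            (fun z hz => chartC hz)
  have hdiff : Differentiable ℝ Φt := hsm.differentiable (by simp)
  -- key orthogonality: fderiv Φt z (perp z) ⟂ z for z ≠ 0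
  have hAperp : ∀ z : E2, z ≠ 0 → ⟪z, fderiv ℝ Φt z (perp z)⟫ = 0 := by
    intro z hz
    have hnz : ‖z‖ ≠ 0 := norm_ne_zero_iff.2 hz
    obtain ⟨θ₀, hc, hs⟩ := exists_theta hz
    have hsc0 : sc θ₀ = ‖z‖⁻¹ • z := sc_eq hc hs
    have hzeq : z = ‖z‖ • sc θ₀ := by
      rw [hsc0, smul_inv_smul₀ hnz]
    set c : ℝ → E2 := fun t => ‖z‖ • sc (θ₀ + t) with hc_def
    have hc0 : c 0 = z := by rw [hc_def]; simp only [add_zero]; exact hzeq.symm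
    have hcnorm : ∀ t, ‖c t‖ = ‖z‖ := by
      intro t
      rw [hc_def]
      simp only [norm_smul, norm_sc, mul_one, Real.norm_eq_abs, abs_of_nonneg (norm_nonneg z)]
    have hcne : ∀ t, c t ≠ 0 := by
      intro t h
      exact hnz (by rw [← hcnorm t, h, norm_zero])
    -- derivative of c at 0
    have hscd : HasDerivAt (fun t : ℝ => sc (θ₀ + t)) (perp (sc θ₀)) 0 := by
      have h1 : HasDerivAt (fun t : ℝ => θ₀ + t) 1 0 := (hasDerivAt_id 0).const_add θ₀
      have h2 := (hasDerivAt_sc (θ₀ + 0)).scomp 0 h1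
      simp only [one_smul, add_zero] at h2; exact h2
    have hcd : HasDerivAt c (perp z) 0 := by
      have := hscd.const_smul ‖z‖
      rw [hc_def]
      refine this.congr_deriv ?_
      rw [← perp_smul, ← hzeq]
    -- derivative of Φt ∘ c at 0
    have hfd : HasFDerivAt Φt (fderiv ℝ Φt z) (c 0) := by
      rw [hc0]; exact (hdiff z).hasFDerivAt
    have hder1 : HasDerivAt (fun t => Φt (c t)) (fderiv ℝ Φt z (perp z)) 0 :=
      hfd.comp_hasDerivAt 0 hcd
    have hΦtc : (fun t => Φt (c t)) = fun t => η ‖z‖ • f (θ₀ + t) := by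
      funext t
      rw [hΦt _ (hcne t), hcnorm t]
      congr 1
      rw [hc_def]
      simp only []
      rw [inv_smul_smul₀ hnz]
    have hder2 : HasDerivAt (fun t => Φt (c t)) (η ‖z‖ • deriv f θ₀) 0 := by
      rw [hΦtc]
      have hdf : HasDerivAt f (deriv f θ₀) (θ₀ + 0) := by
        rw [add_zero]; exact ((hf.differentiable (by simp)) θ₀).hasDerivAt
      have h1 : HasDerivAt (fun t : ℝ => θ₀ + t) 1 0 := (hasDerivAt_id 0).const_add θ₀
      have h2 := (hdf.scomp 0 h1).const_smul (η ‖z‖)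
      simp only [one_smul] at h2; exact h2
    have heq : fderiv ℝ Φt z (perp z) = η ‖z‖ • deriv f θ₀ := hder1.unique hder2
    rw [heq, hzeq, real_inner_smul_left, real_inner_smul_right, real_inner_comm,
      hΦent θ₀]
    ring
  -- definitions of γ and Ψ
  set γ : E2 → ℝ := fun z => ⟪perp z, fderiv ℝ Φt z (perp z)⟫ / ‖z‖ ^ 2 with hγ_def
  set Ψ : E2 → E2 := fun z => (2 * ‖z‖ ^ 2)⁻¹ • (-(fderiv ℝ Φt z z) + γ z • z) with hΨ_def
  -- vanishing of the derivative near 0 and outside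
  have hAz0 : ∀ z : E2, ‖z‖ < 1 / 2 → fderiv ℝ Φt z = 0 := by
    intro z hz
    have hev : Φt =ᶠ[𝓝 z] (fun _ => (0 : E2)) := by
      filter_upwards [isOpen_ball.mem_nhds (show z ∈ ball (0 : E2) (1/2) by
        simpa [mem_ball_zero_iff] using hz)] with y hy
      exact hball y (by simpa [mem_ball_zero_iff] using hy)
    rw [hev.fderiv_eq, fderiv_fun_const]
    rfl
  have hAout : ∀ z : E2, 2 < ‖z‖ → fderiv ℝ Φt z = 0 := by
    intro z hz
    have hev : Φt =ᶠ[𝓝 z] (fun _ => (0 : E2)) := by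
      filter_upwards [(isOpen_lt continuous_const continuous_norm).mem_nhds
        (show z ∈ {y : E2 | 2 < ‖y‖} from hz)] with y hy
      exact hout y (le_of_lt hy)
    rw [hev.fderiv_eq, fderiv_fun_const]
    rfl
  have hγ0 : γ 0 = 0 := by
    rw [hγ_def]
    simp [perp_zero]
  have hΨ0 : Ψ 0 = 0 := by
    rw [hΨ_def]
    simp
  have hγz : ∀ z : E2, fderiv ℝ Φt z = 0 → γ z = 0 := by
    intro z hz
    rw [hγ_def]
    simp [hz]
  have hΨz : ∀ z : E2, fderiv ℝ Φt z = 0 → Ψ z = 0 := by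
    intro z hz
    rw [hΨ_def]
    simp only [hz, ContinuousLinearMap.zero_apply, neg_zero, zero_add]
    rw [hγz z hz, zero_smul, smul_zero]
  -- smoothness of γ
  have hA_cd : ContDiff ℝ (⊤ : ℕ∞) (fderiv ℝ Φt) := hsm.fderiv_right (by simp)
  have hnsq : ContDiff ℝ (⊤ : ℕ∞) (fun z : E2 => ‖z‖ ^ 2) := contDiff_norm_sq ℝ
  have hγsm : ContDiff ℝ (⊤ : ℕ∞) γ := by
    rw [contDiff_iff_contDiffAt]
    intro z₀
    by_cases hz₀ : ‖z₀‖ < 1 / 2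
    · refine (contDiffAt_const (c := (0 : ℝ))).congr_of_eventuallyEq ?_
      filter_upwards [isOpen_ball.mem_nhds (show z₀ ∈ ball (0 : E2) (1/2) by
        simpa [mem_ball_zero_iff] using hz₀)] with z hz
      exact hγz z (hAz0 z (by simpa [mem_ball_zero_iff] using hz))
    · have hz₀ne : z₀ ≠ 0 := by
        intro h; rw [h, norm_zero] at hz₀; norm_num at hz₀
      have h1 : ContDiffAt ℝ (⊤ : ℕ∞) (fun z : E2 => ⟪perp z, fderiv ℝ Φt z (perp z)⟫) z₀ :=
        (contDiff_perp.inner ℝ (hA_cd.clm_apply contDiff_perp)).contDiffAt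
      exact h1.div hnsq.contDiffAt (pow_ne_zero _ (norm_ne_zero_iff.2 hz₀ne))
  have hΨsm : ContDiff ℝ (⊤ : ℕ∞) Ψ := by
    rw [contDiff_iff_contDiffAt]
    intro z₀
    by_cases hz₀ : ‖z₀‖ < 1 / 2
    · refine (contDiffAt_const (c := (0 : E2))).congr_of_eventuallyEq ?_
      filter_upwards [isOpen_ball.mem_nhds (show z₀ ∈ ball (0 : E2) (1/2) by
        simpa [mem_ball_zero_iff] using hz₀)] with z hz
      exact hΨz z (hAz0 z (by simpa [mem_ball_zero_iff] using hz))
    · have hz₀ne : z₀ ≠ 0 := by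
        intro h; rw [h, norm_zero] at hz₀; norm_num at hz₀
      have hinv : ContDiffAt ℝ (⊤ : ℕ∞) (fun z : E2 => (2 * ‖z‖ ^ 2)⁻¹) z₀ :=
        (contDiff_const.mul hnsq).contDiffAt.inv
          (mul_ne_zero two_ne_zero (pow_ne_zero _ (norm_ne_zero_iff.2 hz₀ne)))
      exact hinv.smul (((hA_cd.clm_apply contDiff_id).contDiffAt.neg).add
        (hγsm.contDiffAt.smul contDiffAt_id))
  -- compact support
  have hγcs : HasCompactSupport γ := by
    refine HasCompactSupport.intro (isCompact_closedBall (0 : E2) 2) ?_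
    intro x hx
    exact hγz x (hAout x (by simpa [mem_closedBall_zero_iff, not_le] using hx))
  have hΨcs : HasCompactSupport Ψ := by
    refine HasCompactSupport.intro (isCompact_closedBall (0 : E2) 2) ?_
    intro x hx
    exact hΨz x (hAout x (by simpa [mem_closedBall_zero_iff, not_le] using hx))
  -- the main identity
  have hmain : ∀ z w : E2, fderiv ℝ Φt z w = (-2 * ⟪z, w⟫) • Ψ z + γ z • w := by
    intro z w
    by_cases hz : z = 0
    · subst hz
      rw [hAz0 0 (by rw [norm_zero]; norm_num), hγ0, hΨ0]
      simp
    · have hr2 : ‖z‖ ^ 2 ≠ 0 := pow_ne_zero _ (norm_ne_zero_iff.2 hz)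
      have hAp : fderiv ℝ Φt z (perp z) = γ z • perp z :=
        orth_decomp hz (hAperp z hz)
      set a := ⟪z, w⟫ with ha
      set b := ⟪perp z, w⟫ with hb
      have hw := decomp2 hz w
      rw [← ha, ← hb] at hw
      have hco : -2 * a * (2 * ‖z‖ ^ 2)⁻¹ = -(a / ‖z‖ ^ 2) := by
        rw [mul_inv]
        field_simp
      calc fderiv ℝ Φt z w
          = (a / ‖z‖ ^ 2) • fderiv ℝ Φt z z
            + (b / ‖z‖ ^ 2) • (γ z • perp z) := by
            conv_lhs => rw [hw]
            rw [ContinuousLinearMap.map_add, ContinuousLinearMap.map_smul,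
              ContinuousLinearMap.map_smul, hAp]
        _ = (-2 * a) • Ψ z + γ z • w := by
            rw [hΨ_def]
            simp only []
            conv_rhs => rw [hw, smul_smul, hco]
            module
  exact ⟨Ψ, γ, hΨsm, hΨcs, hγsm, hγcs, hmain, fun z hz => ⟨rfl, rfl⟩, hγ0, hΨ0⟩
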